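/- arXiv:2112.01255 — 3 statements merged into one kernel-verified Lean document; each statement's English description precedes it below -/
import Mathlib

section
/- Let α ∈ (0,1), a ∈ ℂ with |a| = 1, and γ > 0. Then the scattering is reflection-less at the energy E* := ( 2^{1+α} γ Γ((3+α)/2) sin(πα/2) / ( Γ((1−α)/2)(1−cos(πα)) ) )^{2/(1+α)}: one has R_{α,a,γ}(E*) = 0. -/
open Filter Set

noncomputable section

/-- The denominator `D_{α,a,γ}(E) = E^{(1+α)/2} Γ((1-α)/2)(1+|a|²)
+ i γ 2^{1+α} e^{iπα/2} Γ((3+α)/2)`. -/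
def Dden (α : ℝ) (a : ℂ) (γ E : ℝ) : ℂ :=
  ((E ^ ((1 + α) / 2) : ℝ) : ℂ) * ((Real.Gamma ((1 - α) / 2) : ℝ) : ℂ)
      * ((1 + ‖a‖ ^ 2 : ℝ) : ℂ)
    + Complex.I * (γ : ℂ) * (((2 : ℝ) ^ (1 + α) : ℝ) : ℂ)
      * Complex.exp (Complex.I * (Real.pi : ℂ) * (α : ℂ) / 2)
      * ((Real.Gamma ((3 + α) / 2) : ℝ) : ℂ)

/-- The transmission coefficient
`T_{α,a,γ}(E) = | E^{(1+α)/2}(1+e^{iπα}) Γ((1-α)/2) conj(a) / D_{α,a,γ}(E) |²`. -/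
def Tcoef (α : ℝ) (a : ℂ) (γ E : ℝ) : ℝ :=
  ‖(((E ^ ((1 + α) / 2) : ℝ) : ℂ)
      * (1 + Complex.exp (Complex.I * (Real.pi : ℂ) * (α : ℂ)))
      * ((Real.Gamma ((1 - α) / 2) : ℝ) : ℂ) * (starRingEnd ℂ a) / Dden α a γ E)‖ ^ 2

/-- The reflection coefficient
`R_{α,a,γ}(E) = | (E^{(1+α)/2} Γ((1-α)/2)(1-|a|² e^{iπα})
+ i γ 2^{1+α} e^{iπα/2} Γ((3+α)/2)) / D_{α,a,γ}(E) |²`. -/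
def Rcoef (α : ℝ) (a : ℂ) (γ E : ℝ) : ℝ :=
  ‖((((E ^ ((1 + α) / 2) : ℝ) : ℂ) * ((Real.Gamma ((1 - α) / 2) : ℝ) : ℂ)
      * (1 - ((‖a‖ ^ 2 : ℝ) : ℂ) * Complex.exp (Complex.I * (Real.pi : ℂ) * (α : ℂ)))
    + Complex.I * (γ : ℂ) * (((2 : ℝ) ^ (1 + α) : ℝ) : ℂ)
      * Complex.exp (Complex.I * (Real.pi : ℂ) * (α : ℂ) / 2)
      * ((Real.Gamma ((3 + α) / 2) : ℝ) : ℂ)) / Dden α a γ E)‖ ^ 2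

/-! With `|a| = 1` we have `1 - e^{iπα} = -2i sin(πα/2) e^{iπα/2}`, so the numerator of `R` is
`i e^{iπα/2} (γ 2^{1+α} Γ((3+α)/2) - 2 sin(πα/2) Γ((1-α)/2) E^{(1+α)/2})`, a unimodular factor
times a real number that is linear in `E^{(1+α)/2}`. Since `1 - cos(πα) = 2 sin²(πα/2)`, the
energy `E*` is exactly the one at which this real number vanishes. -/

theorem Complex.one_sub_exp_two_mul (z : ℂ) :
    1 - Complex.exp (2 * z) = -2 * Complex.sinh z * Complex.exp z := by
  have h := Complex.exp_ne_zero z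
  rw [Complex.sinh, Complex.exp_neg, two_mul, Complex.exp_add]
  field_simp
  ring

theorem one_sub_exp_I_mul_pi_mul (α : ℝ) :
    1 - Complex.exp (Complex.I * Real.pi * α)
      = -2 * Complex.I * (Real.sin (Real.pi * α / 2) : ℝ)
        * Complex.exp (Complex.I * Real.pi * α / 2) := by
  have hsinh : Complex.sinh (Complex.I * Real.pi * α / 2)
      = Complex.I * (Real.sin (Real.pi * α / 2) : ℝ) := by
    rw [show Complex.I * Real.pi * α / 2 = ((Real.pi * α / 2 : ℝ) : ℂ) * Complex.I by
      push_cast; ring, Complex.sinh_mul_I, Complex.ofReal_sin, mul_comm]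
  conv_lhs => rw [show Complex.I * Real.pi * α = 2 * (Complex.I * Real.pi * α / 2) by ring,
    Complex.one_sub_exp_two_mul, hsinh]
  ring

theorem Rcoef_eq_zero_of_norm_eq_one {α : ℝ} {a : ℂ} {γ E : ℝ} (ha : ‖a‖ = 1)
    (hE : 2 * Real.sin (Real.pi * α / 2) * Real.Gamma ((1 - α) / 2) * E ^ ((1 + α) / 2)
      = γ * 2 ^ (1 + α) * Real.Gamma ((3 + α) / 2)) :
    Rcoef α a γ E = 0 := by
  have hE' := congrArg (fun x : ℝ => (x : ℂ)) hE
  simp only [Complex.ofReal_mul, Complex.ofReal_ofNat] at hE'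
  rw [Rcoef, ha, one_pow, Complex.ofReal_one, one_mul, one_sub_exp_I_mul_pi_mul]
  simp only [div_eq_zero_iff, norm_eq_zero, pow_eq_zero_iff two_ne_zero]
  left
  linear_combination (-Complex.I * Complex.exp (Complex.I * Real.pi * α / 2)) * hE'

/-- For `α ∈ (0,1)`, `|a| = 1` and `γ > 0`, the scattering is reflection-less at the energy
`E* = (2^{1+α} γ Γ((3+α)/2) sin(πα/2) / (Γ((1-α)/2)(1-cos(πα))))^{2/(1+α)}`. -/
theorem reflectionless_energy (α : ℝ) (hα : α ∈ Set.Ioo (0 : ℝ) 1)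
    (a : ℂ) (ha : ‖a‖ = 1) (γ : ℝ) (hγ : 0 < γ) :
    Rcoef α a γ
      (((2 : ℝ) ^ (1 + α) * γ * Real.Gamma ((3 + α) / 2) * Real.sin (Real.pi * α / 2)
          / (Real.Gamma ((1 - α) / 2) * (1 - Real.cos (Real.pi * α)))) ^ (2 / (1 + α)))
      = 0 := by
  obtain ⟨hα₀, hα₁⟩ := hα
  have hsin : 0 < Real.sin (Real.pi * α / 2) :=
    Real.sin_pos_of_pos_of_lt_pi (by positivity) (by nlinarith [Real.pi_pos])
  have hΓ₁ : 0 < Real.Gamma ((1 - α) / 2) := Real.Gamma_pos_of_pos (by linarith)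
  have hΓ₃ : 0 < Real.Gamma ((3 + α) / 2) := Real.Gamma_pos_of_pos (by linarith)
  have hcos : 1 - Real.cos (Real.pi * α) = 2 * Real.sin (Real.pi * α / 2) ^ 2 := by
    rw [Real.sin_sq_eq_half_sub]
    ring_nf
  apply Rcoef_eq_zero_of_norm_eq_one ha
  rw [← inv_div (1 + α) 2, Real.rpow_inv_rpow (by rw [hcos]; positivity) (by positivity), hcos]
  field_simp

end
end

section
/- For every α ∈ [0,1), a ∈ ℂ and γ ∈ ℝ, in the high-energy limit the scattering is independent of γ: lim_{E→+∞} T_{α,a,γ}(E) = 2|a|²(1+cos(πα)) / (1+|a|²)² and lim_{E→+∞} R_{α,a,γ}(E) = (1+|a|⁴−2|a|²cos(πα)) / (1+|a|²)². -/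
/-! Dividing numerator and denominator by `E^{(1+α)/2}`, the `γ`-term is damped by
`E^{-(1+α)/2} → 0`, so both quotients tend to the ratio of the leading coefficients;
the remaining moduli come from `|1 - r e^{iθ}|² = 1 + r² - 2r cos θ`. -/

open Filter Set

noncomputable section

open Complex Topology

theorem tendsto_affine_div_affine_atTop {u v c d : ℂ} (hv : v ≠ 0) :
    Tendsto (fun x : ℝ => ((x : ℂ) * u + c) / ((x : ℂ) * v + d)) atTop (𝓝 (u / v)) := by
  have hinv : Tendsto (fun x : ℝ => (x : ℂ)⁻¹) atTop (𝓝 0) := by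
    simpa using tendsto_inv_atTop_zero.ofReal
  have hquot : Tendsto (fun x : ℝ => (u + c * (x : ℂ)⁻¹) / (v + d * (x : ℂ)⁻¹))
      atTop (𝓝 (u / v)) := by
    have := ((hinv.const_mul c).const_add u).div ((hinv.const_mul d).const_add v)
      (by rwa [mul_zero, add_zero])
    rwa [mul_zero, add_zero, mul_zero, add_zero] at this
  refine hquot.congr' ?_
  filter_upwards [eventually_ne_atTop 0] with x hx
  have hx' : (x : ℂ) ≠ 0 := ofReal_ne_zero.mpr hx
  rw [← mul_div_mul_left _ _ hx']
  congr 1 <;> field_simp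

theorem tendsto_norm_sq_affine_div_affine {f : ℝ → ℝ} (hf : Tendsto f atTop atTop)
    {u v c d : ℂ} (hv : v ≠ 0) :
    Tendsto (fun E => ‖((f E : ℂ) * u + c) / ((f E : ℂ) * v + d)‖ ^ 2) atTop
      (𝓝 (‖u‖ ^ 2 / ‖v‖ ^ 2)) := by
  rw [← div_pow, ← norm_div]
  exact ((continuous_norm.tendsto _).comp ((tendsto_affine_div_affine_atTop hv).comp hf)).pow 2

theorem norm_one_sub_ofReal_mul_exp_sq (r θ : ℝ) :
    ‖1 - (r : ℂ) * exp (θ * I)‖ ^ 2 = 1 + r ^ 2 - 2 * r * Real.cos θ := by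
  rw [Complex.sq_norm, normSq_apply]
  simp only [sub_re, sub_im, one_re, one_im, mul_re, mul_im, ofReal_re, ofReal_im,
    exp_ofReal_mul_I_re, exp_ofReal_mul_I_im]
  linear_combination r ^ 2 * Real.sin_sq_add_cos_sq θ

theorem norm_one_add_exp_sq (θ : ℝ) : ‖1 + exp (θ * I)‖ ^ 2 = 2 * (1 + Real.cos θ) := by
  have := norm_one_sub_ofReal_mul_exp_sq (-1) θ
  push_cast at this
  rw [neg_one_mul, sub_neg_eq_add] at this
  linear_combination this

/-- For every `α ∈ [0,1)`, `a ∈ ℂ`, `γ ∈ ℝ`, in the high-energy limit the scattering is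
independent of `γ`: `T → 2|a|²(1+cos(πα))/(1+|a|²)²` and
`R → (1+|a|⁴-2|a|²cos(πα))/(1+|a|²)²` as `E → +∞`. -/
theorem high_energy_limit (α : ℝ) (hα : α ∈ Set.Ico (0 : ℝ) 1) (a : ℂ) (γ : ℝ) :
    Tendsto (fun E : ℝ => Tcoef α a γ E) atTop
      (nhds (2 * ‖a‖ ^ 2 * (1 + Real.cos (Real.pi * α))
        / (1 + ‖a‖ ^ 2) ^ 2)) ∧
    Tendsto (fun E : ℝ => Rcoef α a γ E) atTop
      (nhds ((1 + ‖a‖ ^ 4 - 2 * ‖a‖ ^ 2 * Real.cos (Real.pi * α))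
        / (1 + ‖a‖ ^ 2) ^ 2)) := by
  obtain ⟨hα0, hα1⟩ := hα
  set g := Real.Gamma ((1 - α) / 2) with hg_def
  set d : ℂ := I * γ * ((2 ^ (1 + α) : ℝ) : ℂ) * exp (I * Real.pi * α / 2)
    * (Real.Gamma ((3 + α) / 2) : ℂ) with hd_def
  have hexp : exp (I * Real.pi * α) = exp ((Real.pi * α : ℝ) * I) := by
    push_cast; ring_nf
  have hg : 0 < g := Real.Gamma_pos_of_pos (by linarith)
  have ha : 0 < 1 + ‖a‖ ^ 2 := by positivity
  have hv : (g : ℂ) * ((1 + ‖a‖ ^ 2 : ℝ) : ℂ) ≠ 0 := by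
    exact_mod_cast (mul_pos hg ha).ne'
  have hpow : Tendsto (fun E : ℝ => E ^ ((1 + α) / 2)) atTop atTop :=
    tendsto_rpow_atTop (by linarith)
  constructor
  · convert tendsto_norm_sq_affine_div_affine hpow hv
      (u := (1 + exp (I * Real.pi * α)) * g * starRingEnd ℂ a) (c := 0) (d := d) using 2
    · rw [Tcoef, Dden, hg_def, hd_def, add_zero]; congr 3 <;> ring
    · simp only [norm_mul, mul_pow, hexp, norm_one_add_exp_sq, norm_real, Complex.norm_conj,
        Real.norm_eq_abs, abs_of_pos hg, abs_of_pos ha]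
      field_simp
  · convert tendsto_norm_sq_affine_div_affine hpow hv
      (u := g * (1 - ((‖a‖ ^ 2 : ℝ) : ℂ) * exp (I * Real.pi * α))) (c := d) (d := d)
      using 2
    · rw [Rcoef, Dden, hg_def, hd_def]; congr 3 <;> ring
    · simp only [norm_mul, mul_pow, hexp, norm_one_sub_ofReal_mul_exp_sq, norm_real,
        Real.norm_eq_abs, abs_of_pos hg, abs_of_pos ha]
      field_simp

end
end

section
/- For every α ∈ [0,1), a ∈ ℂ and γ ∈ ℝ with γ ≠ 0, in the low-energy limit one has lim_{E→0^+} T_{α,a,γ}(E) = 0 and lim_{E→0^+} R_{α,a,γ}(E) = 1; moreover, for α ∈ [0,1) at the bridging parameters a = 1, γ = 0 the coefficients are T_{α,1,0}(E) = (1+cos(πα))/2 and R_{α,1,0}(E) = (1−cos(πα))/2 for every E > 0. -/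
/-! As `E → 0⁺` the factor `E^{(1+α)/2}` vanishes, so every numerator and the denominator
`D` tend to their `E`-independent parts: `0` for `T`, and the coupling term
`iγ 2^{1+α} e^{iπα/2} Γ((3+α)/2)` both for the numerator of `R` and for `D`; the latter is
nonzero as soon as `γ ≠ 0`. At `a = 1`, `γ = 0` the common factor `E^{(1+α)/2} Γ((1-α)/2)`
cancels and what remains is `|1 ± e^{iπα}|² / 4 = (1 ± cos πα) / 2`. -/

open Filter Set

noncomputable section

open Complex in
lemma norm_one_add_exp_mul_I_div_two_sq (θ : ℝ) :
    ‖(1 + exp (θ * I)) / 2‖ ^ 2 = (1 + Real.cos θ) / 2 := by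
  rw [exp_mul_I, ← ofReal_cos, ← ofReal_sin, ← add_assoc, ← ofReal_one, ← ofReal_add, norm_div,
    div_pow, Complex.sq_norm, normSq_add_mul_I]
  have := Real.sin_sq_add_cos_sq θ
  norm_num
  linear_combination (1/4 : ℝ) * this

open Complex in
lemma norm_one_sub_exp_mul_I_div_two_sq (θ : ℝ) :
    ‖(1 - exp (θ * I)) / 2‖ ^ 2 = (1 - Real.cos θ) / 2 := by
  have := norm_one_add_exp_mul_I_div_two_sq (θ + Real.pi)
  rwa [Real.cos_add_pi, ofReal_add, add_mul, exp_add, exp_pi_mul_I, mul_neg_one,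
    ← sub_eq_add_neg] at this

lemma tendsto_norm_div_sq_of_tendsto_zero {X : Type*} {l : Filter X} {f : X → ℂ}
    (hf : Tendsto f l (nhds 0)) (u v w : ℂ) {c : ℂ} (hc : c ≠ 0) :
    Tendsto (fun x => ‖(f x * u + w) / (f x * v + c)‖ ^ 2) l (nhds (‖w / c‖ ^ 2)) := by
  have hnum : Tendsto (fun x => f x * u + w) l (nhds w) := by
    simpa using (hf.mul_const u).add_const w
  have hden : Tendsto (fun x => f x * v + c) l (nhds c) := by
    simpa using (hf.mul_const v).add_const c
  exact ((hnum.div hden hc).norm).pow 2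

lemma tendsto_rpow_nhdsGT_zero {p : ℝ} (hp : 0 < p) :
    Tendsto (fun x : ℝ => x ^ p) (nhdsWithin 0 (Ioi 0)) (nhds 0) := by
  simpa [Real.zero_rpow hp.ne'] using
    (Real.continuousAt_rpow_const 0 p (Or.inr hp.le)).tendsto.mono_left nhdsWithin_le_nhds

def couplingTerm (α γ : ℝ) : ℂ :=
  Complex.I * (γ : ℂ) * (((2 : ℝ) ^ (1 + α) : ℝ) : ℂ)
    * Complex.exp (Complex.I * (Real.pi : ℂ) * (α : ℂ) / 2) * ((Real.Gamma ((3 + α) / 2) : ℝ) : ℂ)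

lemma couplingTerm_ne_zero {α γ : ℝ} (hα : -3 < α) (hγ : γ ≠ 0) : couplingTerm α γ ≠ 0 := by
  have hΓ : 0 < Real.Gamma ((3 + α) / 2) := Real.Gamma_pos_of_pos (by linarith)
  have h2 : (0 : ℝ) < 2 ^ (1 + α) := by positivity
  simp only [couplingTerm, ne_eq, mul_eq_zero, Complex.I_ne_zero, Complex.ofReal_eq_zero,
    Complex.exp_ne_zero, hγ, h2.ne', hΓ.ne', or_self, not_false_eq_true]

section Coefficients

variable (α : ℝ) (a : ℂ) (γ E : ℝ)

lemma Tcoef_eq : Tcoef α a γ E =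
    ‖(((E ^ ((1 + α) / 2) : ℝ) : ℂ) * ((1 + Complex.exp (Complex.I * Real.pi * α))
        * (Real.Gamma ((1 - α) / 2) : ℂ) * starRingEnd ℂ a) + 0)
      / (((E ^ ((1 + α) / 2) : ℝ) : ℂ) * ((Real.Gamma ((1 - α) / 2) : ℂ) * ((1 + ‖a‖ ^ 2 : ℝ) : ℂ))
        + couplingTerm α γ)‖ ^ 2 := by
  rw [Tcoef, Dden, couplingTerm]
  ring_nf

lemma Rcoef_eq : Rcoef α a γ E =
    ‖(((E ^ ((1 + α) / 2) : ℝ) : ℂ) * ((Real.Gamma ((1 - α) / 2) : ℂ)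
        * (1 - ((‖a‖ ^ 2 : ℝ) : ℂ) * Complex.exp (Complex.I * Real.pi * α))) + couplingTerm α γ)
      / (((E ^ ((1 + α) / 2) : ℝ) : ℂ) * ((Real.Gamma ((1 - α) / 2) : ℂ) * ((1 + ‖a‖ ^ 2 : ℝ) : ℂ))
        + couplingTerm α γ)‖ ^ 2 := by
  rw [Rcoef, Dden, couplingTerm]
  ring_nf

end Coefficients

lemma tendsto_Tcoef_nhdsGT_zero {α γ : ℝ} (hα : -1 < α) (hγ : γ ≠ 0) (a : ℂ) :
    Tendsto (Tcoef α a γ) (nhdsWithin 0 (Ioi 0)) (nhds 0) := by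
  have hE := (tendsto_rpow_nhdsGT_zero (p := (1 + α) / 2) (by linarith)).ofReal
  rw [funext (Tcoef_eq α a γ)]
  convert tendsto_norm_div_sq_of_tendsto_zero hE _ _ 0 (couplingTerm_ne_zero (by linarith) hγ)
  simp

lemma tendsto_Rcoef_nhdsGT_zero {α γ : ℝ} (hα : -1 < α) (hγ : γ ≠ 0) (a : ℂ) :
    Tendsto (Rcoef α a γ) (nhdsWithin 0 (Ioi 0)) (nhds 1) := by
  have hc := couplingTerm_ne_zero (by linarith) hγ
  have hE := (tendsto_rpow_nhdsGT_zero (p := (1 + α) / 2) (by linarith)).ofReal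
  rw [funext (Rcoef_eq α a γ)]
  convert tendsto_norm_div_sq_of_tendsto_zero hE _ _ _ hc
  simp [hc]

lemma Dden_one_zero (α E : ℝ) :
    Dden α 1 0 E = ((E ^ ((1 + α) / 2) : ℝ) : ℂ) * (Real.Gamma ((1 - α) / 2) : ℂ) * 2 := by
  simp only [Dden, norm_one, one_pow, Complex.ofReal_zero, mul_zero, zero_mul, add_zero]
  push_cast
  ring

lemma exp_I_mul_pi_mul (α : ℝ) :
    Complex.exp (Complex.I * Real.pi * α) = Complex.exp ((Real.pi * α : ℝ) * Complex.I) := by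
  push_cast
  ring_nf

lemma Tcoef_one_zero {α E : ℝ} (hα : α < 1) (hE : 0 < E) :
    Tcoef α 1 0 E = (1 + Real.cos (Real.pi * α)) / 2 := by
  have hEp : ((E ^ ((1 + α) / 2) : ℝ) : ℂ) ≠ 0 := by exact_mod_cast (Real.rpow_pos_of_pos hE _).ne'
  have hΓ : (Real.Gamma ((1 - α) / 2) : ℂ) ≠ 0 := by
    exact_mod_cast (Real.Gamma_pos_of_pos (by linarith)).ne'
  rw [Tcoef, Dden_one_zero, map_one, mul_one, mul_right_comm _ _ (Real.Gamma _ : ℂ),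
    mul_div_mul_left _ _ (mul_ne_zero hEp hΓ), exp_I_mul_pi_mul, norm_one_add_exp_mul_I_div_two_sq]

lemma Rcoef_one_zero {α E : ℝ} (hα : α < 1) (hE : 0 < E) :
    Rcoef α 1 0 E = (1 - Real.cos (Real.pi * α)) / 2 := by
  have hEp : ((E ^ ((1 + α) / 2) : ℝ) : ℂ) ≠ 0 := by exact_mod_cast (Real.rpow_pos_of_pos hE _).ne'
  have hΓ : (Real.Gamma ((1 - α) / 2) : ℂ) ≠ 0 := by
    exact_mod_cast (Real.Gamma_pos_of_pos (by linarith)).ne'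
  rw [Rcoef, Dden_one_zero, norm_one, one_pow, Complex.ofReal_one, one_mul, Complex.ofReal_zero,
    mul_zero, zero_mul, zero_mul, zero_mul, add_zero, mul_div_mul_left _ _ (mul_ne_zero hEp hΓ),
    exp_I_mul_pi_mul, norm_one_sub_exp_mul_I_div_two_sq]

/-- For every `α ∈ [0,1)`, `a ∈ ℂ` and `γ ≠ 0`, in the low-energy limit `T → 0` and `R → 1`
as `E → 0⁺`; moreover at the bridging parameters `a = 1`, `γ = 0` one has
`T = (1+cos(πα))/2` and `R = (1-cos(πα))/2` for every `E > 0`. -/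
theorem low_energy_limit_and_bridging (α : ℝ) (hα : α ∈ Set.Ico (0 : ℝ) 1) :
    (∀ (a : ℂ) (γ : ℝ), γ ≠ 0 →
      Tendsto (fun E : ℝ => Tcoef α a γ E) (nhdsWithin 0 (Set.Ioi 0)) (nhds 0) ∧
      Tendsto (fun E : ℝ => Rcoef α a γ E) (nhdsWithin 0 (Set.Ioi 0)) (nhds 1)) ∧
    (∀ E : ℝ, 0 < E →
      Tcoef α 1 0 E = (1 + Real.cos (Real.pi * α)) / 2 ∧
      Rcoef α 1 0 E = (1 - Real.cos (Real.pi * α)) / 2) := by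
  obtain ⟨hα0, hα1⟩ := hα
  exact ⟨fun a γ hγ => ⟨tendsto_Tcoef_nhdsGT_zero (by linarith) hγ a,
      tendsto_Rcoef_nhdsGT_zero (by linarith) hγ a⟩,
    fun E hE => ⟨Tcoef_one_zero hα1 hE, Rcoef_one_zero hα1 hE⟩⟩

end
end
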